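/- arXiv:2009.12749 — 4 statements merged into one kernel-verified Lean document; each statement's English description precedes it below -/
import Mathlib

section
/- Let p be a prime, n a positive integer, and σ^n : ℤ_p → ℤ_p the n-fold Bernoulli shift, σ^n(x) = (x − (x mod p^n))/p^n. If (a_m^{(n)}) are the Mahler coefficients of σ^n, then a_{p^n}^{(n)} = 1. -/
/-- The `m`-th Mahler coefficient of `f : ℤ_[p] → ℤ_[p]`:
`a_m = ∑_{i=0}^{m} (-1)^{m+i} C(m,i) f(i)`. -/
noncomputable def mahlerCoeff {p : ℕ} [Fact p.Prime] (f : ℤ_[p] → ℤ_[p]) (m : ℕ) : ℤ_[p] :=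
  ∑ i ∈ Finset.range (m + 1), (-1 : ℤ_[p]) ^ (m + i) * (m.choose i : ℤ_[p]) * f i

lemma appr_natCast_of_lt {p : ℕ} [Fact p.Prime] {n i : ℕ} (h : i < p ^ n) :
    ((i : ℤ_[p]).appr n) = i := by
  have h1 := PadicInt.appr_spec n (i : ℤ_[p])
  have h2 : (i : ℤ_[p]) - (i : ℤ_[p]) ∈ Ideal.span {(p : ℤ_[p]) ^ n} := by
    simp
  have := PadicInt.zmod_congr_of_sub_mem_span n (i : ℤ_[p]) _ _ h1 h2
  have hmod := (ZMod.natCast_eq_natCast_iff _ _ _).mp this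
  have := hmod.eq_of_lt_of_lt (PadicInt.appr_lt _ _) h
  exact this

lemma appr_natCast_pow {p : ℕ} [Fact p.Prime] (n : ℕ) :
    (((p ^ n : ℕ) : ℤ_[p]).appr n) = 0 := by
  have h1 := PadicInt.appr_spec n ((p ^ n : ℕ) : ℤ_[p])
  have h2 : ((p ^ n : ℕ) : ℤ_[p]) - ((0 : ℕ) : ℤ_[p]) ∈ Ideal.span {(p : ℤ_[p]) ^ n} := by
    simp [Ideal.mem_span_singleton]
  have := PadicInt.zmod_congr_of_sub_mem_span n ((p ^ n : ℕ) : ℤ_[p]) _ _ h1 h2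
  have hmod := (ZMod.natCast_eq_natCast_iff _ _ _).mp this
  have hlt : 0 < p ^ n := pow_pos (Fact.out (p := p.Prime)).pos n
  exact hmod.eq_of_lt_of_lt (PadicInt.appr_lt _ _) hlt

/-- The `p^n`-th Mahler coefficient of the `n`-fold Bernoulli shift
`σ^n(x) = (x - (x mod p^n))/p^n` equals `1`. -/
theorem bernoulliShift_mahlerCoeff_pow_eq_one (p : ℕ) [Fact p.Prime] (n : ℕ) (hn : 0 < n)
    (σn : ℤ_[p] → ℤ_[p])
    (hσn : ∀ x : ℤ_[p], (p : ℤ_[p]) ^ n * σn x = x - (x.appr n : ℤ_[p])) :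
    mahlerCoeff σn (p ^ n) = 1 := by
  have hpn : ((p : ℤ_[p]) ^ n) ≠ 0 := by
    exact pow_ne_zero n (Nat.cast_ne_zero.mpr (Fact.out (p := p.Prime)).ne_zero)
  have hzero : ∀ i ∈ Finset.range (p ^ n), σn (i : ℕ) = 0 := by
    intro i hi
    rw [Finset.mem_range] at hi
    have h := hσn (i : ℕ)
    rw [appr_natCast_of_lt hi, sub_self] at h
    exact (mul_eq_zero.mp h).resolve_left hpn
  have hlast : σn ((p ^ n : ℕ) : ℤ_[p]) = 1 := by
    have h := hσn ((p ^ n : ℕ) : ℤ_[p])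
    rw [appr_natCast_pow n] at h
    apply mul_left_cancel₀ hpn
    rw [h]
    push_cast
    ring
  unfold mahlerCoeff
  rw [Finset.sum_range_succ, Finset.sum_eq_zero, zero_add]
  · rw [Nat.choose_self, hlast]
    push_cast
    rw [Even.neg_one_pow ⟨p ^ n, rfl⟩]
    ring
  · intro i hi
    rw [hzero i hi, mul_zero]
end

section
/- Let p be a prime, n a positive integer, and σ^n : ℤ_p → ℤ_p the n-fold Bernoulli shift, σ^n(x) = (x − (x mod p^n))/p^n, with Mahler coefficients (a_m^{(n)}). Then for every integer j ≥ 0 and every m > j·p^n − j + 1, p^j divides a_m^{(n)}; equivalently |a_m^{(n)}|_p ≤ p^{-j}. -/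
/-- Uniqueness of the approximation. -/
lemma appr_eq_of_aux {p : ℕ} [Fact p.Prime] (x : ℤ_[p]) (n a : ℕ) (ha : a < p ^ n)
    (h : (p : ℤ_[p]) ^ n ∣ x - a) : x.appr n = a := by
  have h2 := PadicInt.appr_spec n x
  rw [Ideal.mem_span_singleton] at h2
  have h3 : (p : ℤ_[p]) ^ n ∣ (((a : ℤ) - (x.appr n : ℤ) : ℤ) : ℤ_[p]) := by
    have := dvd_sub h2 h
    have e : x - x.appr n - (x - a) = (((a : ℤ) - (x.appr n : ℤ) : ℤ) : ℤ_[p]) := by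
      push_cast; ring
    rwa [e] at this
  rw [PadicInt.pow_p_dvd_int_iff] at h3
  have hlt := PadicInt.appr_lt x n
  have haz : (a : ℤ) < (p : ℤ) ^ n := by exact_mod_cast ha
  have hbz : ((x.appr n : ℕ) : ℤ) < (p : ℤ) ^ n := by exact_mod_cast hlt
  have := Int.eq_zero_of_abs_lt_dvd h3 (by rw [abs_lt]; omega)
  omega

/-- For the `n`-fold Bernoulli shift `σ^n(x) = (x - (x mod p^n))/p^n` with Mahler
coefficients `a_m^{(n)}`: for every `j ≥ 0` and every `m > j·p^n - j + 1`, `p^j`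
divides `a_m^{(n)}`; equivalently `|a_m^{(n)}|_p ≤ p^{-j}`. -/
theorem bernoulliShift_mahlerCoeff_dvd (p : ℕ) [Fact p.Prime] (n : ℕ) (hn : 0 < n)
    (σn : ℤ_[p] → ℤ_[p])
    (hσn : ∀ x : ℤ_[p], (p : ℤ_[p]) ^ n * σn x = x - (x.appr n : ℤ_[p])) :
    ∀ j m : ℕ, j * p ^ n - j + 1 < m →
      (p : ℤ_[p]) ^ j ∣ mahlerCoeff σn m ∧
      ‖mahlerCoeff σn m‖ ≤ (p : ℝ) ^ (-(j : ℤ)) := by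
  have hp := (Fact.out : p.Prime)
  have hpne : (p : ℤ_[p]) ≠ 0 := Nat.cast_ne_zero.mpr hp.ne_zero
  -- appr invariance under adding p^n
  have happr : ∀ x : ℤ_[p], (x + (p : ℤ_[p]) ^ n).appr n = x.appr n := by
    intro x
    apply appr_eq_of_aux _ _ _ (PadicInt.appr_lt x n)
    have h2 := PadicInt.appr_spec n x
    rw [Ideal.mem_span_singleton] at h2
    have := dvd_add h2 (dvd_refl ((p : ℤ_[p]) ^ n))
    convert this using 1; ring
  -- σn shift identity
  have hshift : ∀ x : ℤ_[p], σn (x + (p : ℤ_[p]) ^ n) = σn x + 1 := by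
    intro x
    apply mul_left_cancel₀ (pow_ne_zero n hpne)
    rw [hσn, happr, mul_add, hσn, mul_one]; ring
  set q := p ^ n with hq
  have hq2 : 2 ≤ q := le_trans hp.two_le (Nat.le_self_pow hn.ne' p)
  set g : ℕ → ℤ_[p] := fun i => σn i with hg
  have hgshift : ∀ x : ℕ, g (x + q) = g x + 1 := by
    intro x
    have e : ((x + q : ℕ) : ℤ_[p]) = (x : ℤ_[p]) + (p : ℤ_[p]) ^ n := by
      rw [hq]; push_cast; ring
    simp only [hg]
    rw [e, hshift]
  set A : ℕ → ℤ_[p] := fun m => (fwdDiff (1 : ℕ))^[m] g 0 with hA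
  -- mahlerCoeff = iterated forward differences
  have hMA : ∀ m, mahlerCoeff σn m = A m := by
    intro m
    show mahlerCoeff σn m = (fwdDiff (1 : ℕ))^[m] g 0
    rw [fwdDiff_iter_eq_sum_shift]
    unfold mahlerCoeff
    refine Finset.sum_congr rfl fun k hk => ?_
    rw [Finset.mem_range] at hk
    have hk' : k ≤ m := Nat.lt_succ_iff.mp hk
    have hsign : ((-1 : ℤ_[p]) ^ (m + k)) = ((-1 : ℤ_[p]) ^ (m - k)) := by
      conv_lhs => rw [show m + k = (m - k) + 2 * k by omega]
      rw [pow_add, pow_mul, neg_one_sq, one_pow, mul_one]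
    rw [zsmul_eq_mul]
    push_cast
    rw [hsign]
    simp only [hg, zero_add, smul_eq_mul, mul_one]
  -- Gregory–Newton consequence
  have hGN : (∑ k ∈ Finset.range q, (q.choose (k + 1)) • (fwdDiff (1 : ℕ))^[k + 1] g)
      = (fun _ : ℕ => (1 : ℤ_[p])) := by
    funext x
    have h1 := shift_eq_sum_fwdDiff_iter (1 : ℕ) g q x
    rw [smul_eq_mul, mul_one, hgshift] at h1
    rw [Finset.sum_range_succ'] at h1
    simp only [Nat.choose_zero_right, one_smul, Function.iterate_zero, id_eq] at h1
    rw [Finset.sum_apply]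
    rw [add_comm _ (g x)] at h1
    exact (add_left_cancel h1).symm
  have hconst : ∀ m : ℕ, (fwdDiff (1 : ℕ))^[m + 1] (fun _ : ℕ => (1 : ℤ_[p])) = fun _ => 0 := by
    intro m
    rw [Function.iterate_succ_apply, fwdDiff_const]
    exact Function.iterate_fixed (fwdDiff_const 1 (0 : ℤ_[p])) m
  have hkey : ∀ m : ℕ, ∑ k ∈ Finset.range q, (q.choose (k + 1)) • A (m + 1 + (k + 1)) = 0 := by
    intro m
    have h2 : (fwdDiff (1 : ℕ))^[m + 1]
        (∑ k ∈ Finset.range q, (q.choose (k + 1)) • (fwdDiff (1 : ℕ))^[k + 1] g) 0 = 0 := by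
      rw [hGN, hconst]
    rw [fwdDiff_iter_finset_sum] at h2
    rw [Finset.sum_apply] at h2
    rw [← h2]
    refine Finset.sum_congr rfl fun k _ => ?_
    rw [fwdDiff_iter_const_smul, Pi.smul_apply]
    congr 1
    show (fwdDiff (1 : ℕ))^[m + 1 + (k + 1)] g 0 = _
    rw [Function.iterate_add_apply]
  -- recurrence: A (m + q + 2) = -∑_{k < q-1} C(q,k+1) • A (m + k + 2)
  have hrec : ∀ m : ℕ, A (m + 1 + q) =
      -∑ k ∈ Finset.range (q - 1), (q.choose (k + 1)) • A (m + 1 + (k + 1)) := by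
    intro m
    have h2 := hkey m
    rw [show q = (q - 1) + 1 by omega] at h2
    rw [Finset.sum_range_succ, Nat.choose_self, one_smul] at h2
    rw [show q - 1 + 1 = q by omega] at h2
    exact eq_neg_of_add_eq_zero_right h2
  -- main induction on j
  have main : ∀ j : ℕ, ∀ m : ℕ, j * (q - 1) + 1 < m → (p : ℤ_[p]) ^ j ∣ A m := by
    intro j
    induction j with
    | zero => intro m _; simpa using one_dvd _
    | succ j ih =>
      intro m hm
      have hmq : m = (m - q - 1) + 1 + q := by
        have : j * (q - 1) + q ≤ (j + 1) * (q - 1) + 1 := by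
          rw [add_mul, one_mul]; omega
        omega
      rw [hmq, hrec]
      apply Dvd.dvd.neg_right
      apply Finset.dvd_sum
      intro k hk
      rw [Finset.mem_range] at hk
      rw [nsmul_eq_mul, pow_succ']
      apply mul_dvd_mul
      · rw [hq]
        exact Nat.cast_dvd_cast (hp.dvd_choose_pow (Nat.succ_ne_zero k) (by omega : k + 1 ≠ p ^ n))
      · apply ih
        have : j * (q - 1) + q ≤ (j + 1) * (q - 1) + 1 := by
          rw [add_mul, one_mul]; omega
        omega
  intro j m hm
  have hdvd : (p : ℤ_[p]) ^ j ∣ mahlerCoeff σn m := by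
    rw [hMA]
    apply main
    have hjq : j ≤ j * q := Nat.le_mul_of_pos_right j (by omega)
    have : j * (q - 1) = j * q - j := by
      rw [Nat.mul_sub, mul_one]
    omega
  refine ⟨hdvd, ?_⟩
  rw [PadicInt.norm_le_pow_iff_mem_span_pow, Ideal.mem_span_singleton]
  exact hdvd
end

section
/- Let p be a prime and f : ℤ_p → ℤ_p a 1-Lipschitz function with Mahler coefficients (a_m). If a_0 ≢ 0 (mod p); a_1 ≡ 1 (mod p) when p is odd, and a_1 ≡ 1 (mod 4) when p = 2; and a_m ≡ 0 (mod p^{⌊log_p (m+1)⌋ + 1}) for all m ≥ 2, then f is ergodic with respect to the normalized Haar measure μ_p on ℤ_p. -/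
open MeasureTheory

noncomputable instance (p : ℕ) [Fact p.Prime] : MeasurableSpace ℤ_[p] := borel _
instance (p : ℕ) [Fact p.Prime] : BorelSpace ℤ_[p] := ⟨rfl⟩

/-!
Write `g x = f x - x`. The hypotheses on the Mahler coefficients say that the forward differences
`Δᵏ g (0)`, `k ≥ 1`, are divisible by `p ^ (⌊log_p (k + 1)⌋ + 1)`. Through the Newton series this
forces `g (x + d) ≡ g x (mod p ^ (n + 1))` whenever `p ^ n ∣ d`, first for natural numbers and then,
by continuity, on all of `ℤ_p`. Hence `f` is an isometry, and by induction on `n` it permutes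
`ℤ / p ^ n` in a single cycle: along one cycle `f^[p ^ n]` moves every point by
`∑_{r < p ^ n} g r ≡ p ^ n f 0 (mod p ^ (n + 1))`, which is `p ^ n` times a unit, so the cycle
modulo `p ^ n` lifts to a single cycle modulo `p ^ (n + 1)`. Thus every orbit of `f` is dense.

An isometry of `ℤ_p` with dense orbits maps balls onto balls of the same radius, so it preserves
the Haar measure. If `S` is invariant, `μ (S ∩ B)` depends only on the radius of the ball `B`;
so `μ` restricted to `S` is translation invariant, hence a multiple of `μ`, which forces
`μ S = 0` or `μ Sᶜ = 0`.
-/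

open Finset fwdDiff Metric PadicInt

theorem Nat.pow_succ_dvd_pow_log_mul_choose {p n N j : ℕ} (hp : p.Prime) (hN : p ^ n ∣ N)
    (hj : 0 < j) : p ^ (n + 1) ∣ p ^ (Nat.log p j + 1) * N.choose j := by
  have := Fact.mk hp
  rcases (N.choose j).eq_zero_or_pos with hC | hC
  · simp [hC]
  -- `j * C(N, j) = N * C(N - 1, j - 1)`, while `v_p(j) ≤ log_p j`.
  have hjC : p ^ n ∣ j * N.choose j := by
    have hjN : j ≤ N := le_of_not_gt fun h => hC.ne' (Nat.choose_eq_zero_of_lt h)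
    obtain ⟨M, rfl⟩ : ∃ M, N = M + 1 := ⟨N - 1, by omega⟩
    obtain ⟨i, rfl⟩ : ∃ i, j = i + 1 := ⟨j - 1, by omega⟩
    rw [mul_comm, ← Nat.add_one_mul_choose_eq]
    exact hN.mul_right _
  have hp0 := hp.pos
  rw [padicValNat_dvd_iff_le (by positivity)] at hjC ⊢
  rw [padicValNat.mul hj.ne' hC.ne'] at hjC
  rw [padicValNat.mul (by positivity) hC.ne', padicValNat.prime_pow]
  have := padicValNat_le_nat_log (p := p) j
  omega

theorem pow_succ_dvd_mul_choose {R : Type*} [CommSemiring R] {p n N j : ℕ} (hp : p.Prime)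
    {c : R} (hc : (p : R) ^ (Nat.log p j + 1) ∣ c) (hN : p ^ n ∣ N) (hj : 0 < j) :
    (p : R) ^ (n + 1) ∣ c * N.choose j := by
  obtain ⟨c, rfl⟩ := hc
  have := Nat.cast_dvd_cast (α := R) (Nat.pow_succ_dvd_pow_log_mul_choose hp hN hj)
  push_cast at this
  exact this.trans ⟨c, by ring⟩

section MahlerDivisibility

variable {R : Type*} [CommRing R] {p : ℕ} {u : ℕ → R}
  (hu : ∀ k, 1 ≤ k → (p : R) ^ (Nat.log p (k + 1) + 1) ∣ Δ_[1] ^[k] u 0)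
include hu

theorem pow_log_dvd_fwdDiff_iter (x : ℕ) {k : ℕ} (hk : 1 ≤ k) :
    (p : R) ^ (Nat.log p (k + 1) + 1) ∣ Δ_[1] ^[k] u x := by
  have hx := shift_eq_sum_fwdDiff_iter 1 (Δ_[1] ^[k] u) x 0
  rw [zero_add, smul_eq_mul, mul_one] at hx
  rw [hx]
  refine dvd_sum fun i _ => ?_
  rw [← Function.iterate_add_apply, nsmul_eq_mul]
  refine Dvd.dvd.mul_left ((pow_dvd_pow _ ?_).trans (hu (i + k) (by omega))) _
  gcongr
  omega

theorem pow_succ_dvd_sub_of_pow_dvd (hp : p.Prime) {n d : ℕ} (hd : p ^ n ∣ d) (x : ℕ) :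
    (p : R) ^ (n + 1) ∣ u (x + d) - u x := by
  have hx := shift_eq_sum_fwdDiff_iter 1 u d x
  rw [smul_eq_mul, mul_one] at hx
  rw [hx, sum_range_succ', Nat.choose_zero_right, one_smul, Function.iterate_zero_apply,
    add_sub_cancel_right]
  refine dvd_sum fun k _ => ?_
  rw [nsmul_eq_mul, mul_comm]
  refine pow_succ_dvd_mul_choose hp ?_ hd k.succ_pos
  exact (pow_dvd_pow _ (by gcongr; omega)).trans (pow_log_dvd_fwdDiff_iter hu x (by omega))

theorem pow_succ_dvd_sum_range_sub (hp : p.Prime) {n N : ℕ} (hN : p ^ n ∣ N) :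
    (p : R) ^ (n + 1) ∣ ∑ r ∈ range N, u r - N * u 0 := by
  set U : ℕ → R := fun x => ∑ r ∈ range x, u r
  have hU : Δ_[1] U = u := funext fun x => by simp [U, fwdDiff, sum_range_succ]
  have hN' := shift_eq_sum_fwdDiff_iter 1 U N 0
  rw [zero_add, smul_eq_mul, mul_one] at hN'
  change (p : R) ^ (n + 1) ∣ U N - N * u 0
  rcases N with _ | N
  · simp [U]
  rw [hN', sum_range_succ']
  simp only [Function.iterate_succ_apply, hU]
  rw [sum_range_succ']
  simp only [zero_add, Nat.choose_one_right, Nat.choose_zero_right, Function.iterate_zero_apply,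
    one_smul, show U 0 = 0 from sum_range_zero u, add_zero, nsmul_eq_mul, add_sub_cancel_right]
  refine dvd_sum fun k _ => ?_
  rw [mul_comm]
  exact pow_succ_dvd_mul_choose hp (hu (k + 1) (by omega)) hN (by omega)

end MahlerDivisibility

theorem fwdDiff_iter_natCast {R : Type*} [Ring R] (k : ℕ) :
    Δ_[1] ^[k] (Nat.cast : ℕ → R) 0 = if k = 1 then 1 else 0 := by
  have hΔ : Δ_[1] (Nat.cast : ℕ → R) = fun _ => 1 := funext fun x => by simp [fwdDiff]
  match k with
  | 0 => simp
  | 1 => simp [hΔ]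
  | k + 2 =>
    rw [Function.iterate_succ_apply, Function.iterate_succ_apply, hΔ, fwdDiff_const,
      Function.iterate_fixed (fwdDiff_const 1 0)]
    simp

theorem fwdDiff_iter_sub_natCast {R : Type*} [CommRing R] (u : ℕ → R) (k : ℕ) :
    Δ_[1] ^[k] (fun x => u x - x) 0 = Δ_[1] ^[k] u 0 - if k = 1 then 1 else 0 := by
  have h : (fun x : ℕ => u x - x) = u + (-1 : ℤ) • (Nat.cast : ℕ → R) := by
    ext x
    simp [sub_eq_add_neg]
  rw [h, fwdDiff_iter_add, fwdDiff_iter_const_smul, Pi.add_apply, Pi.smul_apply,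
    fwdDiff_iter_natCast, neg_one_zsmul, sub_eq_add_neg]

theorem mahlerCoeff_eq_fwdDiff_iter {p : ℕ} [Fact p.Prime] (f : ℤ_[p] → ℤ_[p]) (m : ℕ) :
    mahlerCoeff f m = Δ_[1] ^[m] (fun k : ℕ => f k) 0 := by
  rw [fwdDiff_iter_eq_sum_shift, mahlerCoeff]
  refine sum_congr rfl fun i hi => ?_
  have him : i ≤ m := Nat.lt_succ_iff.mp (mem_range.mp hi)
  rw [zsmul_eq_mul, zero_add, smul_eq_mul, mul_one, show m + i = (m - i) + 2 * i by omega, pow_add,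
    pow_mul, neg_one_sq, one_pow, mul_one]
  push_cast
  ring

theorem pow_log_two_add_one_dvd {R : Type*} [CommSemiring R] {p : ℕ} (hp : p.Prime) {a : R}
    (hodd : p ≠ 2 → (p : R) ∣ a) (htwo : p = 2 → (4 : R) ∣ a) :
    (p : R) ^ (Nat.log p 2 + 1) ∣ a := by
  rcases eq_or_ne p 2 with rfl | h2
  · rw [show Nat.log 2 2 = 1 from Nat.log_pow one_lt_two 1, show ((2 : ℕ) : R) ^ (1 + 1) = 4 by
      norm_num]
    exact htwo rfl
  · rw [Nat.log_of_lt (hp.two_le.lt_of_ne' h2), zero_add, pow_one]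
    exact hodd h2

theorem dvd_iterate_sub_sub_mul {R : Type*} [CommRing R] {h : R → R} {d s : R}
    (hh : ∀ z, d ∣ h z - z - s) (j : ℕ) (z : R) : d ∣ h^[j] z - z - j * s := by
  induction j with
  | zero => simp
  | succ j ih =>
    rw [Function.iterate_succ_apply', Nat.cast_succ]
    convert (hh (h^[j] z)).add ih using 1
    ring

namespace PadicInt

variable {p : ℕ} [Fact p.Prime]

theorem pow_dvd_iff_norm_le {n : ℕ} {z : ℤ_[p]} :
    (p : ℤ_[p]) ^ n ∣ z ↔ ‖z‖ ≤ (p : ℝ) ^ (-(n : ℤ)) := by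
  rw [norm_le_pow_iff_mem_span_pow, Ideal.mem_span_singleton]

theorem isClosed_setOf_pow_dvd (n : ℕ) : IsClosed {z : ℤ_[p] | (p : ℤ_[p]) ^ n ∣ z} := by
  simp only [pow_dvd_iff_norm_le]
  exact isClosed_le continuous_norm continuous_const

theorem pow_dvd_sub_of_forall_natCast {g : ℤ_[p] → ℤ_[p]} (hg : Continuous g) {m n : ℕ}
    (h : ∀ a b : ℕ, (p : ℤ_[p]) ^ m ∣ g (a + p ^ n * b) - g a) (x e : ℤ_[p]) :
    (p : ℤ_[p]) ^ m ∣ g (x + p ^ n * e) - g x :=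
  denseRange_natCast.induction_on₂ (p := fun x e => (p : ℤ_[p]) ^ m ∣ g (x + p ^ n * e) - g x)
    ((isClosed_setOf_pow_dvd m).preimage (by fun_prop)) h x e

theorem appr_eq_of_pow_dvd_sub {x : ℤ_[p]} {n r : ℕ} (hr : r < p ^ n)
    (h : (p : ℤ_[p]) ^ n ∣ x - r) : x.appr n = r := by
  have hdvd : (p : ℤ_[p]) ^ n ∣ ((x.appr n - r : ℤ) : ℤ_[p]) := by
    have := h.sub (Ideal.mem_span_singleton.mp (appr_spec n x))
    push_cast
    convert this using 1
    ring
  have hx := appr_lt x n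
  have := Int.eq_zero_of_abs_lt_dvd ((pow_p_dvd_int_iff n _).mp hdvd)
    (abs_sub_lt_iff.mpr ⟨by zify at hx hr; omega, by zify at hx hr; omega⟩)
  omega

end PadicInt

theorem sum_range_appr_iterate {p : ℕ} [Fact p.Prime] {f : ℤ_[p] → ℤ_[p]} {n : ℕ}
    (htrans : ∀ x y : ℤ_[p], ∃ k < p ^ n, (p : ℤ_[p]) ^ n ∣ f^[k] x - y)
    {M : Type*} [AddCommMonoid M] (G : ℕ → M) (z : ℤ_[p]) :
    ∑ j ∈ range (p ^ n), G ((f^[j] z).appr n) = ∑ r ∈ range (p ^ n), G r := by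
  have hmaps : ∀ j ∈ range (p ^ n), (f^[j] z).appr n ∈ range (p ^ n) :=
    fun j _ => mem_range.mpr (appr_lt _ _)
  have hsurj : ∀ r ∈ range (p ^ n), ∃ j, ∃ _ : j ∈ range (p ^ n), (f^[j] z).appr n = r := by
    intro r hr
    obtain ⟨k, hk, hdvd⟩ := htrans z r
    exact ⟨k, mem_range.mpr hk, appr_eq_of_pow_dvd_sub (mem_range.mp hr) hdvd⟩
  have hinj := inj_on_of_surj_on_of_card_le (fun j _ => (f^[j] z).appr n) hmaps hsurj le_rfl
  refine sum_nbij _ hmaps (fun a ha b hb => hinj ha hb) (fun r hr => ?_) (fun _ _ => rfl)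
  obtain ⟨j, hj, hjr⟩ := hsurj r hr
  exact ⟨j, hj, hjr⟩

section Dynamics

variable {p : ℕ} [hp : Fact p.Prime] {f : ℤ_[p] → ℤ_[p]} (hf : Continuous f)
  (hv : ∀ k, 1 ≤ k → (p : ℤ_[p]) ^ (Nat.log p (k + 1) + 1) ∣ Δ_[1] ^[k] (fun x : ℕ => f x - x) 0)
include hf hv

theorem pow_succ_dvd_sub_sub_of_pow_dvd_sub {n : ℕ} {x y : ℤ_[p]}
    (h : (p : ℤ_[p]) ^ n ∣ x - y) : (p : ℤ_[p]) ^ (n + 1) ∣ (f x - x) - (f y - y) := by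
  obtain ⟨e, he⟩ := h
  obtain rfl : x = y + p ^ n * e := by rw [← he]; ring
  refine pow_dvd_sub_of_forall_natCast (g := fun z => f z - z) (by fun_prop) (fun a b => ?_) y e
  simpa using pow_succ_dvd_sub_of_pow_dvd hv hp.out (dvd_mul_right (p ^ n) b) a

theorem norm_sub_sub_lt {x y : ℤ_[p]} (hxy : x ≠ y) : ‖(f x - x) - (f y - y)‖ < ‖x - y‖ := by
  have hnorm := norm_eq_zpow_neg_valuation (sub_ne_zero.mpr hxy)
  have h := pow_dvd_iff_norm_le.mp
    (pow_succ_dvd_sub_sub_of_pow_dvd_sub hf hv (pow_dvd_iff_norm_le.mpr hnorm.le))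
  rw [hnorm]
  refine h.trans_lt (zpow_lt_zpow_right₀ (by exact_mod_cast hp.out.one_lt) ?_)
  push_cast
  omega

theorem isometry_of_pow_dvd_fwdDiff_iter : Isometry f := by
  refine Isometry.of_dist_eq fun x y => ?_
  rcases eq_or_ne x y with rfl | hxy
  · simp
  have h := norm_sub_sub_lt hf hv hxy
  rw [dist_eq_norm, dist_eq_norm, show f x - f y = (x - y) + ((f x - x) - (f y - y)) by ring,
    IsUltrametricDist.norm_add_eq_max_of_norm_ne_norm h.ne', max_eq_left h.le]

theorem pow_succ_dvd_iterate_sub_sub_sum {n : ℕ}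
    (htrans : ∀ x y : ℤ_[p], ∃ k < p ^ n, (p : ℤ_[p]) ^ n ∣ f^[k] x - y) (z : ℤ_[p]) :
    (p : ℤ_[p]) ^ (n + 1) ∣ f^[p ^ n] z - z - ∑ r ∈ range (p ^ n), (f r - r) := by
  have htele := sum_range_sub (fun j => f^[j] z) (p ^ n)
  rw [Function.iterate_zero_apply] at htele
  rw [← htele, ← sum_range_appr_iterate htrans (fun r : ℕ => f r - r) z, ← sum_sub_distrib]
  refine dvd_sum fun j _ => ?_
  rw [Function.iterate_succ_apply']
  exact pow_succ_dvd_sub_sub_of_pow_dvd_sub hf hv (Ideal.mem_span_singleton.mp (appr_spec n _))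

theorem exists_iterate_lt_pow_succ_dvd {n : ℕ}
    (htrans : ∀ x y : ℤ_[p], ∃ k < p ^ n, (p : ℤ_[p]) ^ n ∣ f^[k] x - y)
    (hf0 : ¬ (p : ℤ_[p]) ∣ f 0) (x y : ℤ_[p]) :
    ∃ k < p ^ (n + 1), (p : ℤ_[p]) ^ (n + 1) ∣ f^[k] x - y := by
  obtain ⟨k, hk, c, hc⟩ := htrans x y
  set S := ∑ r ∈ range (p ^ n), (f r - r)
  have hS : (p : ℤ_[p]) ^ (n + 1) ∣ S - p ^ n * f 0 := by
    simpa only [Nat.cast_pow, Nat.cast_zero, sub_zero] using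
      pow_succ_dvd_sum_range_sub hv hp.out (dvd_refl (p ^ n))
  obtain ⟨w, hw⟩ : ∃ w, w * f 0 = 1 := (IsLocalRing.notMem_maximalIdeal.mp (by
    rwa [maximalIdeal_eq_span_p, Ideal.mem_span_singleton])).exists_left_inv
  -- Since `f^[p ^ n]` shifts by `S ≡ p ^ n * f 0`, the time `j * p ^ n + k` with
  -- `j ≡ -c / f 0 (mod p)` corrects the error `p ^ n * c` of `f^[k] x`.
  set j := (-c * w).appr 1
  have hj : j < p := by simpa only [pow_one] using appr_lt (-c * w) 1
  obtain ⟨q, hq⟩ : (p : ℤ_[p]) ∣ -c * w - j :=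
    Ideal.mem_span_singleton.mp (by simpa only [pow_one] using appr_spec 1 (-c * w))
  refine ⟨j * p ^ n + k, ?_, ?_⟩
  · calc j * p ^ n + k < (j + 1) * p ^ n := by linarith
      _ ≤ p * p ^ n := Nat.mul_le_mul_right _ hj
      _ = p ^ (n + 1) := by ring
  · have hcyc := dvd_iterate_sub_sub_mul (pow_succ_dvd_iterate_sub_sub_sum hf hv htrans) j (f^[k] x)
    rw [← Function.iterate_mul, mul_comm, ← Function.iterate_add_apply] at hcyc
    have key : f^[j * p ^ n + k] x - y = (f^[j * p ^ n + k] x - f^[k] x - j * S)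
        + j * (S - p ^ n * f 0) + (p : ℤ_[p]) ^ (n + 1) * (-(q * f 0)) := by
      linear_combination hc - (p : ℤ_[p]) ^ n * f 0 * hq - (p : ℤ_[p]) ^ n * c * hw
    rw [key]
    exact (hcyc.add (hS.mul_left _)).add (dvd_mul_right _ _)

theorem exists_iterate_lt_pow_dvd (hf0 : ¬ (p : ℤ_[p]) ∣ f 0) (n : ℕ) :
    ∀ x y : ℤ_[p], ∃ k < p ^ n, (p : ℤ_[p]) ^ n ∣ f^[k] x - y := by
  induction n with
  | zero => exact fun x y => ⟨0, by simp, by simp⟩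
  | succ n ih => exact exists_iterate_lt_pow_succ_dvd hf hv ih hf0

theorem denseRange_iterate (hf0 : ¬ (p : ℤ_[p]) ∣ f 0) (x : ℤ_[p]) :
    DenseRange fun k => f^[k] x := by
  refine Metric.denseRange_iff.mpr fun y r hr => ?_
  obtain ⟨n, hn⟩ := exists_pow_neg_lt p hr
  obtain ⟨k, -, hk⟩ := exists_iterate_lt_pow_dvd hf hv hf0 n x y
  exact ⟨k, by rw [dist_comm, dist_eq_norm]; exact (pow_dvd_iff_norm_le.mp hk).trans_lt hn⟩

end Dynamics

theorem Isometry.iterate {X : Type*} [PseudoEMetricSpace X] {f : X → X} (hf : Isometry f) :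
    ∀ k : ℕ, Isometry f^[k]
  | 0 => isometry_id
  | k + 1 => (hf.iterate k).comp hf

theorem Isometry.preimage_closedBall_of_mem {X Y : Type*} [PseudoMetricSpace X]
    [PseudoMetricSpace Y] [IsUltrametricDist Y] {f : X → Y} (hf : Isometry f) {x : X} {y : Y}
    {r : ℝ} (h : f x ∈ closedBall y r) : f ⁻¹' closedBall y r = closedBall x r := by
  rw [IsUltrametricDist.closedBall_eq_of_mem h, hf.preimage_closedBall]

theorem MeasureTheory.Measure.ext_of_closedBall {X : Type*} [PseudoMetricSpace X]
    [IsUltrametricDist X] [SecondCountableTopology X] [MeasurableSpace X] [BorelSpace X]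
    {μ ν : Measure X} [IsFiniteMeasure μ]
    (h : ∀ x, ∀ r > 0, μ (closedBall x r) = ν (closedBall x r)) (huniv : μ Set.univ = ν Set.univ) :
    μ = ν := by
  set C := {s : Set X | ∃ x, ∃ r > 0, s = closedBall x r}
  have hbasis : TopologicalSpace.IsTopologicalBasis C := by
    refine TopologicalSpace.isTopologicalBasis_of_isOpen_of_nhds ?_ fun x U hxU hU => ?_
    · rintro _ ⟨x, r, hr, rfl⟩
      exact IsUltrametricDist.isOpen_closedBall x hr.ne'
    · obtain ⟨r, hr, hrU⟩ := nhds_basis_closedBall.mem_iff.mp (hU.mem_nhds hxU)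
      exact ⟨_, ⟨x, r, hr, rfl⟩, mem_closedBall_self hr.le, hrU⟩
  have hpi : IsPiSystem C := by
    rintro _ ⟨x, r, hr, rfl⟩ _ ⟨y, s, hs, rfl⟩ hne
    rcases IsUltrametricDist.closedBall_subset_trichotomy (x := x) (y := y) (r := r) (s := s)
      with hsub | hsub | hdisj
    · exact ⟨x, r, hr, Set.inter_eq_left.mpr hsub⟩
    · exact ⟨y, s, hs, Set.inter_eq_right.mpr hsub⟩
    · exact absurd hdisj (Set.not_disjoint_iff_nonempty_inter.mpr hne)
  refine ext_of_generate_finite C ?_ hpi ?_ huniv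
  · rw [BorelSpace.measurable_eq (α := X), hbasis.borel_eq_generateFrom]
  · rintro _ ⟨x, r, hr, rfl⟩
    exact h x r hr

section Ultrametric

variable {G : Type*} [NormedAddCommGroup G] [IsUltrametricDist G] [SecondCountableTopology G]
  [MeasurableSpace G] [BorelSpace G] {μ : Measure G} [μ.IsAddHaarMeasure] [IsFiniteMeasure μ]
  {f : G → G}

theorem Isometry.measurePreserving (hf : Isometry f) (hfd : DenseRange f) :
    MeasurePreserving f μ μ := by
  have hmeas := hf.continuous.measurable
  refine ⟨hmeas, ?_⟩
  have := Measure.isFiniteMeasure_map μ f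
  refine Measure.ext_of_closedBall (fun y r hr => ?_) ?_
  · obtain ⟨x, hx⟩ := hfd.exists_mem_open (IsUltrametricDist.isOpen_closedBall y hr.ne')
      ⟨y, mem_closedBall_self hr.le⟩
    rw [Measure.map_apply hmeas measurableSet_closedBall, hf.preimage_closedBall_of_mem hx,
      Measure.addHaar_closedBall_center, Measure.addHaar_closedBall_center μ y]
  · rw [Measure.map_apply hmeas MeasurableSet.univ, Set.preimage_univ]

theorem Isometry.ergodic [LocallyCompactSpace G] (hf : Isometry f)
    (hdense : ∀ x, DenseRange fun k => f^[k] x) : Ergodic f μ := by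
  have hmp : MeasurePreserving f μ μ := by
    refine hf.measurePreserving ((hdense (f 0)).mono ?_)
    rintro _ ⟨k, rfl⟩
    exact ⟨f^[k] 0,
      (Function.iterate_succ_apply' f k 0).symm.trans (Function.iterate_succ_apply f k 0)⟩
  refine ⟨hmp, ⟨fun S hS hinv => ?_⟩⟩
  set ν := μ.restrict S
  have hball : ∀ x y : G, ∀ r > 0, ν (closedBall x r) = ν (closedBall y r) := by
    intro x y r hr
    obtain ⟨k, hk⟩ := (hdense x).exists_mem_open (IsUltrametricDist.isOpen_closedBall y hr.ne')
      ⟨y, mem_closedBall_self hr.le⟩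
    have hpre : f^[k] ⁻¹' (closedBall y r ∩ S) = closedBall x r ∩ S := by
      rw [Set.preimage_inter, Function.IsFixedPt.preimage_iterate hinv k,
        (hf.iterate k).preimage_closedBall_of_mem hk]
    rw [Measure.restrict_apply measurableSet_closedBall,
      Measure.restrict_apply measurableSet_closedBall, ← hpre,
      (hmp.iterate k).measure_preimage (measurableSet_closedBall.inter hS).nullMeasurableSet]
  have : ν.IsAddLeftInvariant := by
    refine ⟨fun a => ?_⟩
    have := Measure.isFiniteMeasure_map ν (a + ·)
    refine Measure.ext_of_closedBall (fun y r hr => ?_) ?_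
    · rw [Measure.map_apply (measurable_const_add a) measurableSet_closedBall,
        preimage_add_closedBall, hball _ _ r hr]
    · rw [Measure.map_apply (measurable_const_add a) MeasurableSet.univ, Set.preimage_univ]
  have hν := Measure.isAddLeftInvariant_eq_smul ν μ
  set c := ν.addHaarScalarFactor μ
  have hS' : μ S = c * μ S := by
    simpa [ν, Measure.restrict_apply_self] using congr($hν S)
  have hSc : 0 = c * μ Sᶜ := by
    simpa [ν, Measure.restrict_apply hS.compl] using congr($hν Sᶜ)
  rw [Filter.eventuallyConst_set', ae_eq_empty, ae_eq_univ]
  rcases mul_eq_zero.mp hSc.symm with hc | hc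
  · left
    rw [hS', hc, zero_mul]
  · exact Or.inr hc

end Ultrametric

/-- A 1-Lipschitz `f : ℤ_p → ℤ_p` whose Mahler coefficients satisfy `a_0 ≢ 0 (mod p)`,
`a_1 ≡ 1 (mod p)` for odd `p` (resp. `a_1 ≡ 1 (mod 4)` for `p = 2`), and
`a_m ≡ 0 (mod p^{⌊log_p (m+1)⌋ + 1})` for all `m ≥ 2` is ergodic with respect to the
normalized Haar measure on `ℤ_p` (in particular it is measure-preserving and every
measurable invariant set has measure `0` or `1`). -/
theorem oneLipschitz_ergodic (p : ℕ) [Fact p.Prime] (f : ℤ_[p] → ℤ_[p])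
    (hlip : ∀ x y : ℤ_[p], ‖f x - f y‖ ≤ ‖x - y‖)
    (h0 : ¬ (p : ℤ_[p]) ∣ mahlerCoeff f 0)
    (h1odd : p ≠ 2 → (p : ℤ_[p]) ∣ (mahlerCoeff f 1 - 1))
    (h1two : p = 2 → (4 : ℤ_[p]) ∣ (mahlerCoeff f 1 - 1))
    (h2 : ∀ m : ℕ, 2 ≤ m → (p : ℤ_[p]) ^ (Nat.log p (m + 1) + 1) ∣ mahlerCoeff f m)
    (μ : Measure ℤ_[p]) [μ.IsAddHaarMeasure] [IsProbabilityMeasure μ] :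
    (∀ S : Set ℤ_[p], MeasurableSet S → μ (f ⁻¹' S) = μ S) ∧
    (∀ S : Set ℤ_[p], MeasurableSet S → f ⁻¹' S = S → μ S = 0 ∨ μ S = 1) := by
  have hv : ∀ k, 1 ≤ k →
      (p : ℤ_[p]) ^ (Nat.log p (k + 1) + 1) ∣ Δ_[1] ^[k] (fun x : ℕ => f x - x) 0 := by
    intro k hk
    rw [fwdDiff_iter_sub_natCast, ← mahlerCoeff_eq_fwdDiff_iter]
    obtain rfl | hk := hk.eq_or_lt
    · simpa using pow_log_two_add_one_dvd Fact.out h1odd h1two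
    · simpa [hk.ne'] using h2 k hk
  have hf0 : ¬ (p : ℤ_[p]) ∣ f 0 := by simpa [mahlerCoeff] using h0
  have hf : Continuous f := (LipschitzWith.of_dist_le_mul (K := 1) fun x y => by
    simpa [dist_eq_norm] using hlip x y).continuous
  have hE : Ergodic f μ :=
    (isometry_of_pow_dvd_fwdDiff_iter hf hv).ergodic (denseRange_iterate hf hv hf0)
  exact ⟨fun S hS => hE.measure_preimage hS.nullMeasurableSet,
    fun S hS hinv => hE.prob_eq_zero_or_one hS hinv⟩
end

section
/- Let p be a prime, n a positive integer, and f : ℤ_p → ℤ_p a 1-Lipschitz function. Then for every z ∈ {0,1,…,p^n−1} there exists a 1-Lipschitz function G_z : ℤ_p → ℤ_p such that for all x ∈ ℤ_p, f(x) = (f(x mod p^n)) mod p^n + p^n · G_z(t), where z = x mod p^n and t = p^{-n}(x − (x mod p^n)) ∈ ℤ_p. -/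
/-- Every 1-Lipschitz `f : ℤ_p → ℤ_p` decomposes as
`f x = (f (x mod p^n)) mod p^n + p^n · G_z t`, where `z = x mod p^n`,
`t = p^{-n}(x - (x mod p^n))`, and each `G_z : ℤ_p → ℤ_p` is 1-Lipschitz. -/
theorem oneLipschitz_decomposition (p : ℕ) [Fact p.Prime] (n : ℕ) (hn : 0 < n)
    (f : ℤ_[p] → ℤ_[p]) (hlip : ∀ x y : ℤ_[p], ‖f x - f y‖ ≤ ‖x - y‖) :
    ∀ z : ℕ, z < p ^ n → ∃ G : ℤ_[p] → ℤ_[p],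
      (∀ a b : ℤ_[p], ‖G a - G b‖ ≤ ‖a - b‖) ∧
      ∀ x t : ℤ_[p], x.appr n = z →
        (p : ℤ_[p]) ^ n * t = x - (x.appr n : ℤ_[p]) →
        f x = ((f (z : ℤ_[p])).appr n : ℤ_[p]) + (p : ℤ_[p]) ^ n * G t := by
  intro z hz
  have hpn : ((p : ℤ_[p]) ^ n) ≠ 0 := by
    exact pow_ne_zero _ (Nat.cast_ne_zero.mpr (Fact.out (p := p.Prime)).ne_zero)
  have hpnorm : (0 : ℝ) < ‖(p : ℤ_[p]) ^ n‖ := norm_pos_iff.mpr hpn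
  -- divisibility for each t
  have key : ∀ t : ℤ_[p], (p : ℤ_[p]) ^ n ∣
      (f ((z : ℤ_[p]) + (p : ℤ_[p]) ^ n * t) - ((f (z : ℤ_[p])).appr n : ℤ_[p])) := by
    intro t
    have h1 : (p : ℤ_[p]) ^ n ∣ (f ((z : ℤ_[p]) + (p : ℤ_[p]) ^ n * t) - f (z : ℤ_[p])) := by
      rw [← Ideal.mem_span_singleton, ← PadicInt.norm_le_pow_iff_mem_span_pow]
      calc ‖f ((z : ℤ_[p]) + (p : ℤ_[p]) ^ n * t) - f (z : ℤ_[p])‖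
          ≤ ‖((z : ℤ_[p]) + (p : ℤ_[p]) ^ n * t) - (z : ℤ_[p])‖ := hlip _ _
        _ = ‖(p : ℤ_[p]) ^ n * t‖ := by ring_nf
        _ = ‖(p : ℤ_[p]) ^ n‖ * ‖t‖ := norm_mul _ _
        _ ≤ ‖(p : ℤ_[p]) ^ n‖ * 1 := by
            exact mul_le_mul_of_nonneg_left (PadicInt.norm_le_one t) (norm_nonneg _)
        _ = (p : ℝ) ^ (-(n : ℤ)) := by
            rw [mul_one, PadicInt.norm_p_pow]
    have h2 : (p : ℤ_[p]) ^ n ∣ (f (z : ℤ_[p]) - ((f (z : ℤ_[p])).appr n : ℤ_[p])) := by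
      have := PadicInt.appr_spec n (f (z : ℤ_[p]))
      rwa [Ideal.mem_span_singleton] at this
    have := dvd_add h1 h2
    simpa using this
  refine ⟨fun t => (key t).choose, ?_, ?_⟩
  · intro a b
    have ha := (key a).choose_spec
    have hb := (key b).choose_spec
    have hdiff : (p : ℤ_[p]) ^ n * ((key a).choose - (key b).choose)
        = f ((z : ℤ_[p]) + (p : ℤ_[p]) ^ n * a) - f ((z : ℤ_[p]) + (p : ℤ_[p]) ^ n * b) := by
      rw [mul_sub, ← ha, ← hb]; ring
    have h3 : ‖(p : ℤ_[p]) ^ n‖ * ‖(key a).choose - (key b).choose‖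
        ≤ ‖(p : ℤ_[p]) ^ n‖ * ‖a - b‖ := by
      rw [← norm_mul, hdiff]
      calc ‖f ((z : ℤ_[p]) + (p : ℤ_[p]) ^ n * a) - f ((z : ℤ_[p]) + (p : ℤ_[p]) ^ n * b)‖
          ≤ ‖((z : ℤ_[p]) + (p : ℤ_[p]) ^ n * a) - ((z : ℤ_[p]) + (p : ℤ_[p]) ^ n * b)‖ :=
            hlip _ _
        _ = ‖(p : ℤ_[p]) ^ n * (a - b)‖ := by ring_nf
        _ = ‖(p : ℤ_[p]) ^ n‖ * ‖a - b‖ := norm_mul _ _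
    exact le_of_mul_le_mul_left h3 hpnorm
  · intro x t hxz hxt
    have hx : (z : ℤ_[p]) + (p : ℤ_[p]) ^ n * t = x := by
      rw [hxt, hxz]; ring
    beta_reduce
    rw [← hx]
    linear_combination (key t).choose_spec
end
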